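/- Let λ > 1, γ > 0, θ > 3 + γ, ν ≥ 0, μ ≥ 0 and d_i > 0. Let (a,b) be a positive solution of the dyadic Hall MHD system on [0,∞) with ‖a(0)‖_γ² + ‖b(0)‖_γ² < ∞, and assume t ↦ ‖a(t)‖_{θ/3+2γ/3}³ + ‖b(t)‖_{(θ+1)/3+2γ/3}³ is locally integrable on [0,∞). Then the functions τ ↦ ‖a(τ)‖_{γ+1}², τ ↦ ‖b(τ)‖_{γ+1}², τ ↦ ∑_{j≥1} λ_j^{2γ+θ} a_j(τ)² a_{j+1}(τ), τ ↦ ∑_{j≥1} λ_j^{2γ+θ} b_j(τ)² a_{j+1}(τ) and τ ↦ ∑_{j≥1} λ_j^{2γ+θ+1} b_j(τ)² b_{j+1}(τ) are locally integrable on [0,∞), ‖a(t)‖_γ² + ‖b(t)‖_γ² is finite for every t ≥ 0, and for every t ≥ 0: ‖a(t)‖_γ² + ‖b(t)‖_γ² − (‖a(0)‖_γ² + ‖b(0)‖_γ²) = −2∫₀ᵗ (ν‖a(τ)‖_{γ+1}² + μ‖b(τ)‖_{γ+1}²) dτ + 2(λ^{2γ} − 1)∫₀ᵗ ∑_{j≥1}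 λ_j^{2γ+θ} a_j(τ)² a_{j+1}(τ) dτ + 2 d_i (λ^{2γ} − 1)∫₀ᵗ ∑_{j≥1} λ_j^{2γ+θ+1} b_j(τ)² b_{j+1}(τ) dτ + 2(λ^{2γ} − 1)∫₀ᵗ ∑_{j≥1} λ_j^{2γ+θ} b_j(τ)² a_{j+1}(τ) dτ. -/

import Mathlib

/-!
Truncate the weighted energy `∑ λ_n^{2γ} (a_n² + b_n²)` to the first `N` shells. Along the
ODEs, shell `n` sends `2 T_n` of weighted energy to shell `n + 1`, which receives
`2 λ^{2γ} T_n`, where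
`T_n = λ_n^{2γ+θ} (a_n² + b_n²) a_{n+1} + d_i λ_n^{2γ+θ+1} b_n² b_{n+1}`.
Summing over the first `N` shells therefore telescopes to dissipation, a net source
`2 (λ^{2γ} - 1) ∑_{n ≤ N} T_n` and an outgoing boundary flux `2 λ^{2γ} T_N`. For a positive
solution every term of the integrated identity is nonnegative, so it passes to the limit
`N → ∞` by monotone convergence, and the boundary term vanishes because the `∫ T_N` are the
terms of a convergent series. That series converges since `∑ λ_n^{r} u_n² v_{n+1} ≤ ‖u‖_p² ‖v‖_q`
for `r ≤ 2p + q` bounds every flux by `‖a‖_{θ/3+2γ/3}³ + ‖b‖_{(θ+1)/3+2γ/3}³`, which is locally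
integrable by hypothesis; since `θ > 3 + γ`, these norms also dominate the dissipation norms
`‖·‖_{γ+1}`.
-/

open Real MeasureTheory Set
open scoped ENNReal

noncomputable section

/-- Square of the `H^s` norm as an extended nonnegative real: `∑_{j≥1} λ^{2sj} u_j²`. -/
def esum (lam s : ℝ) (u : ℕ → ℝ) : ℝ≥0∞ :=
  ∑' j : ℕ, ENNReal.ofReal (lam ^ (2 * s * ((j : ℝ) + 1)) * (u (j + 1)) ^ 2)

/-- Square of the `H^s` norm, real-valued: `∑_{j≥1} λ^{2sj} u_j²`. -/
def dsum (lam s : ℝ) (u : ℕ → ℝ) : ℝ :=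
  ∑' j : ℕ, lam ^ (2 * s * ((j : ℝ) + 1)) * (u (j + 1)) ^ 2

/-- The `H^s` norm `‖u‖_s = (∑_{j≥1} λ^{2sj} u_j²)^{1/2}`. -/
def dnorm (lam s : ℝ) (u : ℕ → ℝ) : ℝ := Real.sqrt (dsum lam s u)

/-- Flux-type sum `∑_{j≥1} λ^{sj} u_j² v_{j+1}` as an extended nonnegative real. -/
def eflux (lam s : ℝ) (u v : ℕ → ℝ → ℝ) (τ : ℝ) : ℝ≥0∞ :=
  ∑' j : ℕ, ENNReal.ofReal (lam ^ (s * ((j : ℝ) + 1)) * ((u (j + 1) τ) ^ 2 * v (j + 2) τ))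

/-- The dyadic (Hall) MHD system: `(a, b)` is a solution on `[0,∞)` with (one-sided)
derivatives `a'`, `b'`; each `a_j, b_j` is `C¹` on `[0,∞)`, `a_0 ≡ 0 ≡ b_0`,
the ODEs hold for `j ≥ 1`, `t ≥ 0`, and `(a_j(t))_{j≥1}, (b_j(t))_{j≥1} ∈ ℓ²`. -/
structure IsDyadicSol (lam θ ν μ di : ℝ) (a b a' b' : ℕ → ℝ → ℝ) : Prop where
  a_zero : ∀ t : ℝ, a 0 t = 0
  b_zero : ∀ t : ℝ, b 0 t = 0
  a_deriv : ∀ j : ℕ, ∀ t ∈ Ici (0:ℝ), HasDerivWithinAt (a j) (a' j t) (Ici 0) t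
  b_deriv : ∀ j : ℕ, ∀ t ∈ Ici (0:ℝ), HasDerivWithinAt (b j) (b' j t) (Ici 0) t
  a_deriv_cont : ∀ j : ℕ, ContinuousOn (a' j) (Ici 0)
  b_deriv_cont : ∀ j : ℕ, ContinuousOn (b' j) (Ici 0)
  eq_a : ∀ j : ℕ, 1 ≤ j → ∀ t ∈ Ici (0:ℝ),
    a' j t + ν * lam ^ (2 * (j : ℝ)) * a j t =
      -(lam ^ (θ * (j : ℝ)) * a j t * a (j + 1) t
          - lam ^ (θ * ((j : ℝ) - 1)) * (a (j - 1) t) ^ 2)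
        - (lam ^ (θ * (j : ℝ)) * b j t * b (j + 1) t
          - lam ^ (θ * ((j : ℝ) - 1)) * (b (j - 1) t) ^ 2)
  eq_b : ∀ j : ℕ, 1 ≤ j → ∀ t ∈ Ici (0:ℝ),
    b' j t + μ * lam ^ (2 * (j : ℝ)) * b j t =
      lam ^ (θ * (j : ℝ)) * a j t * b (j + 1) t
        - lam ^ (θ * (j : ℝ)) * b j t * a (j + 1) t
        - di * (lam ^ ((θ + 1) * (j : ℝ)) * b j t * b (j + 1) t
          - lam ^ ((θ + 1) * ((j : ℝ) - 1)) * (b (j - 1) t) ^ 2)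
  ell2_a : ∀ t ∈ Ici (0:ℝ), Summable (fun j : ℕ => (a (j + 1) t) ^ 2)
  ell2_b : ∀ t ∈ Ici (0:ℝ), Summable (fun j : ℕ => (b (j + 1) t) ^ 2)

/-- The rescaled dyadic (Hall) MHD system with wavenumbers `Λ_j = Λ^j` and
dissipation exponent `α`. -/
structure IsRescaledSol (Lam α ν μ di : ℝ) (a b a' b' : ℕ → ℝ → ℝ) : Prop where
  a_zero : ∀ t : ℝ, a 0 t = 0
  b_zero : ∀ t : ℝ, b 0 t = 0
  a_deriv : ∀ j : ℕ, ∀ t ∈ Ici (0:ℝ), HasDerivWithinAt (a j) (a' j t) (Ici 0) t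
  b_deriv : ∀ j : ℕ, ∀ t ∈ Ici (0:ℝ), HasDerivWithinAt (b j) (b' j t) (Ici 0) t
  a_deriv_cont : ∀ j : ℕ, ContinuousOn (a' j) (Ici 0)
  b_deriv_cont : ∀ j : ℕ, ContinuousOn (b' j) (Ici 0)
  eq_a : ∀ j : ℕ, 1 ≤ j → ∀ t ∈ Ici (0:ℝ),
    a' j t + ν * Lam ^ (2 * α * (j : ℝ)) * a j t =
      -(Lam ^ (j : ℝ) * a j t * a (j + 1) t) + Lam ^ ((j : ℝ) - 1) * (a (j - 1) t) ^ 2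
        - Lam ^ (j : ℝ) * b j t * b (j + 1) t + Lam ^ ((j : ℝ) - 1) * (b (j - 1) t) ^ 2
  eq_b : ∀ j : ℕ, 1 ≤ j → ∀ t ∈ Ici (0:ℝ),
    b' j t + μ * Lam ^ (2 * α * (j : ℝ)) * b j t =
      Lam ^ (j : ℝ) * a j t * b (j + 1) t - Lam ^ (j : ℝ) * b j t * a (j + 1) t
        - di * (Lam ^ ((α + 1) * (j : ℝ)) * b j t * b (j + 1) t
          - Lam ^ ((α + 1) * ((j : ℝ) - 1)) * (b (j - 1) t) ^ 2)
  ell2_a : ∀ t ∈ Ici (0:ℝ), Summable (fun j : ℕ => (a (j + 1) t) ^ 2)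
  ell2_b : ∀ t ∈ Ici (0:ℝ), Summable (fun j : ℕ => (b (j + 1) t) ^ 2)

/-- A solution is positive when all components `a_j(t), b_j(t)` (for `j ≥ 1`,
`t ≥ 0`) are positive. -/
def PositiveSol (a b : ℕ → ℝ → ℝ) : Prop :=
  ∀ j : ℕ, 1 ≤ j → ∀ t ∈ Ici (0:ℝ), 0 < a j t ∧ 0 < b j t

open Filter Topology

lemma sum_range_mul_sub_succ {R : Type*} [CommRing R] (c : R) (S : ℕ → R) (N : ℕ) :
    ∑ j ∈ Finset.range N, (c * S j - S (j + 1))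
      = (c - 1) * ∑ j ∈ Finset.range N, S (j + 1) - c * S N + c * S 0 := by
  induction N with
  | zero => simp
  | succ N ih => rw [Finset.sum_range_succ, Finset.sum_range_succ, ih]; ring

lemma tendsto_ofReal_sum_range {f : ℕ → ℝ} (hf : ∀ j, 0 ≤ f j) :
    Tendsto (fun N => ENNReal.ofReal (∑ j ∈ Finset.range N, f j)) atTop
      (𝓝 (∑' j, ENNReal.ofReal (f j))) := by
  simpa only [ENNReal.ofReal_sum_of_nonneg fun j _ => hf j] using ENNReal.tendsto_nat_tsum _

lemma tendsto_lintegral_ofReal_sum_range {α : Type*} [MeasurableSpace α] {μ : Measure α}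
    {f : ℕ → α → ℝ} (hf : ∀ j, AEMeasurable (fun x => ENNReal.ofReal (f j x)) μ)
    (hf0 : ∀ j, ∀ᵐ x ∂μ, 0 ≤ f j x) :
    Tendsto (fun N => ∫⁻ x, ENNReal.ofReal (∑ j ∈ Finset.range N, f j x) ∂μ) atTop
      (𝓝 (∫⁻ x, ∑' j, ENNReal.ofReal (f j x) ∂μ)) := by
  have hsum : ∀ N, ∫⁻ x, ENNReal.ofReal (∑ j ∈ Finset.range N, f j x) ∂μ
      = ∑ j ∈ Finset.range N, ∫⁻ x, ENNReal.ofReal (f j x) ∂μ := fun N => by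
    rw [← lintegral_finsetSum' _ fun j _ => hf j]
    refine lintegral_congr_ae ?_
    filter_upwards [ae_all_iff.2 hf0] with x hx
    exact ENNReal.ofReal_sum_of_nonneg fun j _ => hx j
  simp_rw [hsum, lintegral_tsum hf]
  exact ENNReal.tendsto_nat_tsum _

lemma tendsto_lintegral_ofReal_of_lintegral_tsum_ne_top {α : Type*} [MeasurableSpace α]
    {μ : Measure α} {f : ℕ → α → ℝ} (hf : ∀ n, AEMeasurable (fun x => ENNReal.ofReal (f n x)) μ)
    (hfin : ∫⁻ x, ∑' n, ENNReal.ofReal (f n x) ∂μ ≠ ⊤) :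
    Tendsto (fun n => ∫⁻ x, ENNReal.ofReal (f n x) ∂μ) atTop (𝓝 0) := by
  rw [lintegral_tsum hf] at hfin
  exact ENNReal.tendsto_atTop_zero_of_tsum_ne_top hfin

lemma lintegral_lt_top_of_le_const_mul {α : Type*} [MeasurableSpace α] {μ : Measure α}
    {f g : α → ℝ≥0∞} {c : ℝ≥0∞} (hc : c ≠ ⊤) (hg : ∫⁻ x, g x ∂μ < ⊤)
    (hfg : ∀ᵐ x ∂μ, f x ≤ c * g x) : ∫⁻ x, f x ∂μ < ⊤ :=
  calc ∫⁻ x, f x ∂μ ≤ ∫⁻ x, c * g x ∂μ := lintegral_mono_ae hfg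
    _ = c * ∫⁻ x, g x ∂μ := lintegral_const_mul' c g hc
    _ < ⊤ := ENNReal.mul_lt_top hc.lt_top hg

lemma aemeasurable_ofReal_restrict_Icc {f : ℝ → ℝ} (hf : ContinuousOn f (Ici 0)) (t : ℝ) :
    AEMeasurable (fun τ => ENNReal.ofReal (f τ)) (volume.restrict (Icc 0 t)) :=
  ((hf.mono Icc_subset_Ici_self).aemeasurable measurableSet_Icc).ennreal_ofReal

lemma ofReal_add_lintegral_eq_of_hasDerivWithinAt {E g h : ℝ → ℝ}
    (hE : ∀ τ ∈ Ici (0:ℝ), HasDerivWithinAt E (g τ - h τ) (Ici 0) τ)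
    (hg : ContinuousOn g (Ici 0)) (hh : ContinuousOn h (Ici 0))
    (hE0 : ∀ τ ∈ Ici (0:ℝ), 0 ≤ E τ) (hg0 : ∀ τ ∈ Ici (0:ℝ), 0 ≤ g τ)
    (hh0 : ∀ τ ∈ Ici (0:ℝ), 0 ≤ h τ) {t : ℝ} (ht : 0 ≤ t) :
    ENNReal.ofReal (E t) + ∫⁻ τ in Icc 0 t, ENNReal.ofReal (h τ)
      = ENNReal.ofReal (E 0) + ∫⁻ τ in Icc 0 t, ENNReal.ofReal (g τ) := by
  have hsub : Icc 0 t ⊆ Ici (0:ℝ) := Icc_subset_Ici_self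
  have hofReal : ∀ f : ℝ → ℝ, ContinuousOn f (Ici 0) → (∀ τ ∈ Ici (0:ℝ), 0 ≤ f τ) →
      ENNReal.ofReal (∫ τ in Icc 0 t, f τ) = ∫⁻ τ in Icc 0 t, ENNReal.ofReal (f τ) :=
    fun f hf hf0 => ofReal_integral_eq_lintegral_ofReal (hf.mono hsub).integrableOn_Icc
      ((ae_restrict_iff' measurableSet_Icc).2 (ae_of_all _ fun τ hτ => hf0 τ (hsub hτ)))
  have hftc : ∫ τ in Icc 0 t, (g τ - h τ) = E t - E 0 := by
    rw [integral_Icc_eq_integral_Ioc, ← intervalIntegral.integral_of_le ht]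
    exact intervalIntegral.integral_eq_sub_of_hasDeriv_right_of_le ht
      (fun τ hτ => (hE τ (hsub hτ)).continuousWithinAt.mono hsub)
      (fun τ hτ => (hE τ hτ.1.le).mono fun _ hx => hτ.1.le.trans hx.le)
      (((hg.sub hh).mono hsub).intervalIntegrable_of_Icc ht)
  rw [integral_sub (hg.mono hsub).integrableOn_Icc (hh.mono hsub).integrableOn_Icc] at hftc
  have hint0 : ∀ f : ℝ → ℝ, (∀ τ ∈ Ici (0:ℝ), 0 ≤ f τ) → 0 ≤ ∫ τ in Icc 0 t, f τ :=
    fun f hf0 => setIntegral_nonneg measurableSet_Icc fun τ hτ => hf0 τ (hsub hτ)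
  rw [← hofReal g hg hg0, ← hofReal h hh hh0,
    ← ENNReal.ofReal_add (hE0 t ht) (hint0 h hh0),
    ← ENNReal.ofReal_add (hE0 0 self_mem_Ici) (hint0 g hg0)]
  congr 1
  linarith

lemma ENNReal.mul_rpow_inv_two_le (x y : ℝ≥0∞) :
    x * y ^ (2⁻¹ : ℝ) ≤ x ^ (3 / 2 : ℝ) + y ^ (3 / 2 : ℝ) := by
  have h32 : ∀ z : ℝ≥0∞, z * z ^ (2⁻¹ : ℝ) = z ^ (3 / 2 : ℝ) := fun z => by
    rw [show (3 / 2 : ℝ) = 1 + 2⁻¹ by norm_num,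
      ENNReal.rpow_add_of_nonneg _ _ zero_le_one (by norm_num), ENNReal.rpow_one]
  rcases le_total x y with h | h
  · calc x * y ^ (2⁻¹ : ℝ) ≤ y * y ^ (2⁻¹ : ℝ) := by gcongr
      _ ≤ _ := (h32 y).trans_le le_add_self
  · calc x * y ^ (2⁻¹ : ℝ) ≤ x * x ^ (2⁻¹ : ℝ) := by gcongr
      _ ≤ _ := (h32 x).trans_le le_self_add

lemma ENNReal.le_rpow_three_halves_add_one (x : ℝ≥0∞) : x ≤ x ^ (3 / 2 : ℝ) + 1 := by
  rcases le_total x 1 with h | h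
  · exact le_add_left h
  · calc x = x ^ (1 : ℝ) := (ENNReal.rpow_one x).symm
      _ ≤ x ^ (3 / 2 : ℝ) := ENNReal.rpow_le_rpow_of_exponent_le h (by norm_num)
      _ ≤ _ := le_self_add

lemma esum_mono {lam s s' : ℝ} (hlam : 1 ≤ lam) (hs : s ≤ s') (u : ℕ → ℝ) :
    esum lam s u ≤ esum lam s' u := by
  refine ENNReal.tsum_le_tsum fun j => ENNReal.ofReal_le_ofReal ?_
  gcongr

lemma eflux_le_esum_mul_rpow_inv_two {lam p q r : ℝ} (hlam : 1 ≤ lam) (hq : 0 ≤ q)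
    (hr : r ≤ 2 * p + q) (u v : ℕ → ℝ → ℝ) (τ : ℝ) (hv : ∀ j, 0 ≤ v (j + 2) τ) :
    eflux lam r u v τ
      ≤ esum lam p (fun j => u j τ) * esum lam q (fun j => v j τ) ^ (2⁻¹ : ℝ) := by
  have hl0 : 0 < lam := zero_lt_one.trans_le hlam
  have hv_le : ∀ j : ℕ, ENNReal.ofReal (lam ^ (q * ((j : ℝ) + 2)) * v (j + 2) τ)
      ≤ esum lam q (fun j => v j τ) ^ (2⁻¹ : ℝ) := by
    intro j
    rw [ENNReal.le_rpow_inv_iff two_pos, ENNReal.rpow_two,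
      ← ENNReal.ofReal_pow (mul_nonneg (by positivity) (hv j))]
    refine le_trans (le_of_eq ?_) (ENNReal.le_tsum (j + 1))
    rw [mul_pow, ← Real.rpow_mul_natCast hl0.le]
    push_cast
    ring_nf
  have hterm : ∀ j : ℕ, lam ^ (r * ((j : ℝ) + 1)) * (u (j + 1) τ ^ 2 * v (j + 2) τ)
      ≤ lam ^ (2 * p * ((j : ℝ) + 1)) * u (j + 1) τ ^ 2
          * (lam ^ (q * ((j : ℝ) + 2)) * v (j + 2) τ) := by
    intro j
    have hj : (0 : ℝ) ≤ j := j.cast_nonneg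
    calc lam ^ (r * ((j : ℝ) + 1)) * (u (j + 1) τ ^ 2 * v (j + 2) τ)
        ≤ lam ^ (2 * p * ((j : ℝ) + 1) + q * ((j : ℝ) + 2))
            * (u (j + 1) τ ^ 2 * v (j + 2) τ) := by
          gcongr
          · exact mul_nonneg (sq_nonneg _) (hv j)
          · nlinarith
      _ = _ := by rw [Real.rpow_add hl0]; ring
  calc eflux lam r u v τ
      ≤ ∑' j : ℕ, ENNReal.ofReal (lam ^ (2 * p * ((j : ℝ) + 1)) * u (j + 1) τ ^ 2)
          * esum lam q (fun j => v j τ) ^ (2⁻¹ : ℝ) := by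
        refine ENNReal.tsum_le_tsum fun j => ?_
        calc _ ≤ _ := ENNReal.ofReal_le_ofReal (hterm j)
          _ = _ := ENNReal.ofReal_mul (by positivity)
          _ ≤ _ := mul_le_mul_right (hv_le j) _
    _ = _ := ENNReal.tsum_mul_right

lemma aemeasurable_eflux {lam s : ℝ} {u v : ℕ → ℝ → ℝ} (hu : ∀ n, ContinuousOn (u n) (Ici 0))
    (hv : ∀ n, ContinuousOn (v n) (Ici 0)) (t : ℝ) :
    AEMeasurable (eflux lam s u v) (volume.restrict (Icc 0 t)) :=
  AEMeasurable.tsum fun _ => aemeasurable_ofReal_restrict_Icc (by fun_prop) t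

def modeEnergy (lam s : ℝ) (u : ℕ → ℝ → ℝ) (n : ℕ) (t : ℝ) : ℝ :=
  lam ^ (2 * s * n) * u n t ^ 2

def fluxTerm (lam s : ℝ) (u v : ℕ → ℝ → ℝ) (n : ℕ) (t : ℝ) : ℝ :=
  lam ^ (s * n) * (u n t ^ 2 * v (n + 1) t)

def shellFlux (lam θ γ di : ℝ) (a b : ℕ → ℝ → ℝ) (n : ℕ) (t : ℝ) : ℝ :=
  fluxTerm lam (2 * γ + θ) a a n t + fluxTerm lam (2 * γ + θ) b a n t
    + di * fluxTerm lam (2 * γ + θ + 1) b b n t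

def partialEnergy (lam γ : ℝ) (a b : ℕ → ℝ → ℝ) (N : ℕ) (t : ℝ) : ℝ :=
  ∑ j ∈ Finset.range N, (modeEnergy lam γ a (j + 1) t + modeEnergy lam γ b (j + 1) t)

def partialDissipation (lam γ ν μ : ℝ) (a b : ℕ → ℝ → ℝ) (N : ℕ) (t : ℝ) : ℝ :=
  ∑ j ∈ Finset.range N,
    (2 * ν * modeEnergy lam (γ + 1) a (j + 1) t + 2 * μ * modeEnergy lam (γ + 1) b (j + 1) t)

lemma hasDerivWithinAt_modeEnergy {lam s u' t : ℝ} {u : ℕ → ℝ → ℝ} {n : ℕ} {S : Set ℝ}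
    (hu : HasDerivWithinAt (u n) u' S t) :
    HasDerivWithinAt (modeEnergy lam s u n) (lam ^ (2 * s * n) * (2 * u n t * u')) S t :=
  ((hu.fun_pow 2).const_mul _).congr_deriv (by ring)

lemma esum_eq_tsum_modeEnergy (lam s : ℝ) (u : ℕ → ℝ → ℝ) (t : ℝ) :
    esum lam s (fun j => u j t) = ∑' j, ENNReal.ofReal (modeEnergy lam s u (j + 1) t) := by
  simp only [esum, modeEnergy, Nat.cast_add, Nat.cast_one]

lemma eflux_eq_tsum_fluxTerm (lam s : ℝ) (u v : ℕ → ℝ → ℝ) (t : ℝ) :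
    eflux lam s u v t = ∑' j, ENNReal.ofReal (fluxTerm lam s u v (j + 1) t) := by
  simp only [eflux, fluxTerm, Nat.cast_add, Nat.cast_one]

lemma modeEnergy_nonneg {lam : ℝ} (hlam : 0 ≤ lam) (s : ℝ) (u : ℕ → ℝ → ℝ) (n : ℕ) (t : ℝ) :
    0 ≤ modeEnergy lam s u n t := by
  unfold modeEnergy; positivity

lemma fluxTerm_nonneg {lam : ℝ} (hlam : 0 ≤ lam) (s : ℝ) (u : ℕ → ℝ → ℝ) {v : ℕ → ℝ → ℝ}
    {n : ℕ} {t : ℝ} (hv : 0 ≤ v (n + 1) t) : 0 ≤ fluxTerm lam s u v n t :=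
  mul_nonneg (by positivity) (mul_nonneg (sq_nonneg _) hv)

lemma shellFlux_nonneg {lam θ γ di : ℝ} (hlam : 0 ≤ lam) (hdi : 0 ≤ di) {a b : ℕ → ℝ → ℝ}
    {n : ℕ} {t : ℝ} (ha : 0 ≤ a (n + 1) t) (hb : 0 ≤ b (n + 1) t) :
    0 ≤ shellFlux lam θ γ di a b n t := by
  unfold shellFlux
  have := fluxTerm_nonneg hlam (2 * γ + θ + 1) b hb
  have := fluxTerm_nonneg hlam (2 * γ + θ) a ha
  have := fluxTerm_nonneg hlam (2 * γ + θ) b ha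
  positivity

lemma continuousOn_shellFlux {lam θ γ di : ℝ} {a b : ℕ → ℝ → ℝ} {s : Set ℝ}
    (ha : ∀ n, ContinuousOn (a n) s) (hb : ∀ n, ContinuousOn (b n) s) (n : ℕ) :
    ContinuousOn (shellFlux lam θ γ di a b n) s := by
  unfold shellFlux fluxTerm
  fun_prop

lemma tendsto_ofReal_partialEnergy {lam : ℝ} (hlam : 0 ≤ lam) (γ : ℝ) (a b : ℕ → ℝ → ℝ)
    (t : ℝ) :
    Tendsto (fun N => ENNReal.ofReal (partialEnergy lam γ a b N t)) atTop
      (𝓝 (esum lam γ (fun j => a j t) + esum lam γ (fun j => b j t))) := by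
  have h := tendsto_ofReal_sum_range fun j =>
    add_nonneg (modeEnergy_nonneg hlam γ a (j + 1) t) (modeEnergy_nonneg hlam γ b (j + 1) t)
  rwa [tsum_congr fun j => ENNReal.ofReal_add (modeEnergy_nonneg hlam γ a (j + 1) t)
      (modeEnergy_nonneg hlam γ b (j + 1) t),
    ENNReal.tsum_add, ← esum_eq_tsum_modeEnergy, ← esum_eq_tsum_modeEnergy] at h

namespace IsDyadicSol

variable {lam θ γ ν μ di : ℝ} {a b a' b' : ℕ → ℝ → ℝ}

lemma continuousOn_a (hsol : IsDyadicSol lam θ ν μ di a b a' b') (n : ℕ) :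
    ContinuousOn (a n) (Ici 0) :=
  fun t ht => (hsol.a_deriv n t ht).continuousWithinAt

lemma continuousOn_b (hsol : IsDyadicSol lam θ ν μ di a b a' b') (n : ℕ) :
    ContinuousOn (b n) (Ici 0) :=
  fun t ht => (hsol.b_deriv n t ht).continuousWithinAt

lemma hasDerivWithinAt_modeEnergy_add (hsol : IsDyadicSol lam θ ν μ di a b a' b')
    (hlam : 0 < lam) (n : ℕ) {t : ℝ} (ht : t ∈ Ici (0:ℝ)) :
    HasDerivWithinAt (fun τ => modeEnergy lam γ a (n + 1) τ + modeEnergy lam γ b (n + 1) τ)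
      (2 * (lam ^ (2 * γ) * shellFlux lam θ γ di a b n t - shellFlux lam θ γ di a b (n + 1) t)
        - (2 * ν * modeEnergy lam (γ + 1) a (n + 1) t
          + 2 * μ * modeEnergy lam (γ + 1) b (n + 1) t)) (Ici 0) t := by
  refine ((hasDerivWithinAt_modeEnergy (hsol.a_deriv (n + 1) t ht)).add
    (hasDerivWithinAt_modeEnergy (hsol.b_deriv (n + 1) t ht))).congr_deriv ?_
  have ea := hsol.eq_a (n + 1) (Nat.le_add_left 1 n) t ht
  have eb := hsol.eq_b (n + 1) (Nat.le_add_left 1 n) t ht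
  have hpow : ∀ (s : ℝ) (m : ℕ), lam ^ (s * m) = (lam ^ s) ^ m :=
    fun s m => Real.rpow_mul_natCast hlam.le s m
  have hprev : ((n + 1 : ℕ) : ℝ) - 1 = n := by push_cast; ring
  simp only [Nat.add_sub_cancel, hprev, hpow] at ea eb
  simp only [shellFlux, fluxTerm, modeEnergy, hpow]
  rw [show 2 * γ + θ + 1 = 2 * γ + (θ + 1) by ring, show 2 * (γ + 1) = 2 * γ + 2 by ring,
    Real.rpow_add hlam (2 * γ) θ, Real.rpow_add hlam (2 * γ) (θ + 1), Real.rpow_add hlam (2 * γ) 2]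
  -- the cross terms `a_n b_n b_{n+1}` of the two equations cancel
  linear_combination (2 * (lam ^ (2 * γ)) ^ (n + 1) * a (n + 1) t) * ea
    + (2 * (lam ^ (2 * γ)) ^ (n + 1) * b (n + 1) t) * eb

lemma hasDerivWithinAt_partialEnergy (hsol : IsDyadicSol lam θ ν μ di a b a' b')
    (hlam : 0 < lam) (N : ℕ) {t : ℝ} (ht : t ∈ Ici (0:ℝ)) :
    HasDerivWithinAt (partialEnergy lam γ a b N)
      (2 * (lam ^ (2 * γ) - 1) * ∑ j ∈ Finset.range N, shellFlux lam θ γ di a b (j + 1) t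
        - (partialDissipation lam γ ν μ a b N t
          + 2 * lam ^ (2 * γ) * shellFlux lam θ γ di a b N t)) (Ici 0) t := by
  have h0 : shellFlux lam θ γ di a b 0 t = 0 := by
    simp [shellFlux, fluxTerm, hsol.a_zero, hsol.b_zero]
  refine (HasDerivWithinAt.fun_sum fun j _ =>
    hsol.hasDerivWithinAt_modeEnergy_add (γ := γ) hlam j ht).congr_deriv ?_
  rw [Finset.sum_sub_distrib, ← Finset.mul_sum, sum_range_mul_sub_succ, h0, partialDissipation]
  ring

lemma partialEnergy_balance (hsol : IsDyadicSol lam θ ν μ di a b a' b') (hlam : 1 < lam)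
    (hγ : 0 ≤ γ) (hν : 0 ≤ ν) (hμ : 0 ≤ μ) (hdi : 0 ≤ di)
    (ha : ∀ n, ∀ τ ∈ Ici (0:ℝ), 0 ≤ a (n + 1) τ) (hb : ∀ n, ∀ τ ∈ Ici (0:ℝ), 0 ≤ b (n + 1) τ)
    (N : ℕ) {t : ℝ} (ht : 0 ≤ t) :
    ENNReal.ofReal (partialEnergy lam γ a b N t)
        + (∫⁻ τ in Icc 0 t, ENNReal.ofReal (partialDissipation lam γ ν μ a b N τ))
        + ENNReal.ofReal (2 * lam ^ (2 * γ))
          * ∫⁻ τ in Icc 0 t, ENNReal.ofReal (shellFlux lam θ γ di a b N τ)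
      = ENNReal.ofReal (partialEnergy lam γ a b N 0)
        + ENNReal.ofReal (2 * (lam ^ (2 * γ) - 1)) * ∫⁻ τ in Icc 0 t,
            ENNReal.ofReal (∑ j ∈ Finset.range N, shellFlux lam θ γ di a b (j + 1) τ) := by
  have hl0 : 0 < lam := zero_lt_one.trans hlam
  have hc : 1 ≤ lam ^ (2 * γ) := Real.one_le_rpow hlam.le (by linarith)
  have hca := hsol.continuousOn_a
  have hcb := hsol.continuousOn_b
  have hS : ∀ n, ∀ τ ∈ Ici (0:ℝ), 0 ≤ shellFlux lam θ γ di a b n τ :=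
    fun n τ hτ => shellFlux_nonneg hl0.le hdi (ha n τ hτ) (hb n τ hτ)
  have hD : ∀ τ, 0 ≤ partialDissipation lam γ ν μ a b N τ := fun τ =>
    Finset.sum_nonneg fun j _ => by
      have := modeEnergy_nonneg hl0.le (γ + 1) a (j + 1) τ
      have := modeEnergy_nonneg hl0.le (γ + 1) b (j + 1) τ
      positivity
  have key := ofReal_add_lintegral_eq_of_hasDerivWithinAt
    (fun τ hτ => hsol.hasDerivWithinAt_partialEnergy hl0 N hτ)
    (by unfold shellFlux fluxTerm; fun_prop)
    (by unfold partialDissipation shellFlux fluxTerm modeEnergy; fun_prop)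
    (fun τ _ => Finset.sum_nonneg fun j _ =>
      add_nonneg (modeEnergy_nonneg hl0.le γ a (j + 1) τ) (modeEnergy_nonneg hl0.le γ b (j + 1) τ))
    (fun τ hτ => mul_nonneg (by linarith) (Finset.sum_nonneg fun j _ => hS (j + 1) τ hτ))
    (fun τ hτ => add_nonneg (hD τ) (mul_nonneg (by positivity) (hS N τ hτ))) ht
  rwa [setLIntegral_congr_fun measurableSet_Icc fun τ hτ => by
      rw [ENNReal.ofReal_add (hD τ) (mul_nonneg (by positivity) (hS N τ hτ.1)),
        ENNReal.ofReal_mul (by positivity)],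
    lintegral_add_left' (aemeasurable_ofReal_restrict_Icc
      (by unfold partialDissipation modeEnergy; fun_prop) t),
    setLIntegral_congr_fun measurableSet_Icc fun τ _ => ENNReal.ofReal_mul (by linarith),
    lintegral_const_mul' _ _ ENNReal.ofReal_ne_top, lintegral_const_mul' _ _ ENNReal.ofReal_ne_top,
    ← add_assoc] at key

lemma tendsto_lintegral_partialDissipation (hsol : IsDyadicSol lam θ ν μ di a b a' b')
    (hlam : 0 ≤ lam) (hν : 0 ≤ ν) (hμ : 0 ≤ μ) (t : ℝ) :
    Tendsto (fun N => ∫⁻ τ in Icc 0 t, ENNReal.ofReal (partialDissipation lam γ ν μ a b N τ))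
      atTop (𝓝 (∫⁻ τ in Icc 0 t, (ENNReal.ofReal (2 * ν) * esum lam (γ + 1) (fun j => a j τ)
          + ENNReal.ofReal (2 * μ) * esum lam (γ + 1) (fun j => b j τ)))) := by
  have hca := hsol.continuousOn_a
  have hcb := hsol.continuousOn_b
  have hsplit : ∀ j τ, ENNReal.ofReal (2 * ν * modeEnergy lam (γ + 1) a (j + 1) τ
        + 2 * μ * modeEnergy lam (γ + 1) b (j + 1) τ)
      = ENNReal.ofReal (2 * ν) * ENNReal.ofReal (modeEnergy lam (γ + 1) a (j + 1) τ)
        + ENNReal.ofReal (2 * μ) * ENNReal.ofReal (modeEnergy lam (γ + 1) b (j + 1) τ) := by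
    intro j τ
    have := modeEnergy_nonneg hlam (γ + 1) a (j + 1) τ
    have := modeEnergy_nonneg hlam (γ + 1) b (j + 1) τ
    rw [ENNReal.ofReal_add (by positivity) (by positivity),
      ENNReal.ofReal_mul (by positivity : (0:ℝ) ≤ 2 * ν),
      ENNReal.ofReal_mul (by positivity : (0:ℝ) ≤ 2 * μ)]
  have h := tendsto_lintegral_ofReal_sum_range (μ := volume.restrict (Icc 0 t))
    (f := fun j τ => 2 * ν * modeEnergy lam (γ + 1) a (j + 1) τ
      + 2 * μ * modeEnergy lam (γ + 1) b (j + 1) τ)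
    (fun j => aemeasurable_ofReal_restrict_Icc (by unfold modeEnergy; fun_prop) t)
    (fun j => ae_of_all _ fun τ => by
      have := modeEnergy_nonneg hlam (γ + 1) a (j + 1) τ
      have := modeEnergy_nonneg hlam (γ + 1) b (j + 1) τ
      positivity)
  simp only [hsplit, ENNReal.tsum_add, ENNReal.tsum_mul_left, ← esum_eq_tsum_modeEnergy] at h
  exact h

lemma lintegral_tsum_ofReal_shellFlux (hsol : IsDyadicSol lam θ ν μ di a b a' b')
    (hlam : 0 ≤ lam) (hdi : 0 ≤ di)
    (ha : ∀ n, ∀ τ ∈ Ici (0:ℝ), 0 ≤ a (n + 1) τ) (hb : ∀ n, ∀ τ ∈ Ici (0:ℝ), 0 ≤ b (n + 1) τ)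
    (t : ℝ) :
    ∫⁻ τ in Icc 0 t, ∑' j, ENNReal.ofReal (shellFlux lam θ γ di a b (j + 1) τ)
      = (∫⁻ τ in Icc 0 t, eflux lam (2 * γ + θ) a a τ)
        + (∫⁻ τ in Icc 0 t, eflux lam (2 * γ + θ) b a τ)
        + ENNReal.ofReal di * ∫⁻ τ in Icc 0 t, eflux lam (2 * γ + θ + 1) b b τ := by
  have hca := hsol.continuousOn_a
  have hcb := hsol.continuousOn_b
  have hpt : EqOn (fun τ => ∑' j, ENNReal.ofReal (shellFlux lam θ γ di a b (j + 1) τ))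
      (fun τ => eflux lam (2 * γ + θ) a a τ + eflux lam (2 * γ + θ) b a τ
        + ENNReal.ofReal di * eflux lam (2 * γ + θ + 1) b b τ) (Icc 0 t) := by
    intro τ hτ
    simp only [eflux_eq_tsum_fluxTerm, ← ENNReal.tsum_mul_left, ← ENNReal.tsum_add]
    refine tsum_congr fun j => ?_
    have haa := fluxTerm_nonneg hlam (2 * γ + θ) a (ha (j + 1) τ hτ.1)
    have hba := fluxTerm_nonneg hlam (2 * γ + θ) b (ha (j + 1) τ hτ.1)
    have hbb := fluxTerm_nonneg hlam (2 * γ + θ + 1) b (hb (j + 1) τ hτ.1)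
    rw [shellFlux, ENNReal.ofReal_add (by positivity) (by positivity),
      ENNReal.ofReal_add haa hba, ENNReal.ofReal_mul hdi]
  rw [setLIntegral_congr_fun measurableSet_Icc hpt,
    lintegral_add_left' ((aemeasurable_eflux hca hca t).fun_add (aemeasurable_eflux hcb hca t)),
    lintegral_add_left' (aemeasurable_eflux hca hca t),
    lintegral_const_mul' _ _ ENNReal.ofReal_ne_top]

lemma energy_identity (hsol : IsDyadicSol lam θ ν μ di a b a' b') (hlam : 1 < lam)
    (hγ : 0 ≤ γ) (hν : 0 ≤ ν) (hμ : 0 ≤ μ) (hdi : 0 ≤ di)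
    (ha : ∀ n, ∀ τ ∈ Ici (0:ℝ), 0 ≤ a (n + 1) τ) (hb : ∀ n, ∀ τ ∈ Ici (0:ℝ), 0 ≤ b (n + 1) τ)
    {t : ℝ} (ht : 0 ≤ t)
    (haa : ∫⁻ τ in Icc 0 t, eflux lam (2 * γ + θ) a a τ ≠ ⊤)
    (hba : ∫⁻ τ in Icc 0 t, eflux lam (2 * γ + θ) b a τ ≠ ⊤)
    (hbb : ∫⁻ τ in Icc 0 t, eflux lam (2 * γ + θ + 1) b b τ ≠ ⊤) :
    esum lam γ (fun j => a j t) + esum lam γ (fun j => b j t)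
        + (∫⁻ τ in Icc 0 t, (ENNReal.ofReal (2 * ν) * esum lam (γ + 1) (fun j => a j τ)
            + ENNReal.ofReal (2 * μ) * esum lam (γ + 1) (fun j => b j τ)))
      = esum lam γ (fun j => a j 0) + esum lam γ (fun j => b j 0)
        + ENNReal.ofReal (2 * (lam ^ (2 * γ) - 1))
            * (∫⁻ τ in Icc 0 t, eflux lam (2 * γ + θ) a a τ)
        + ENNReal.ofReal (2 * di * (lam ^ (2 * γ) - 1))
            * (∫⁻ τ in Icc 0 t, eflux lam (2 * γ + θ + 1) b b τ)
        + ENNReal.ofReal (2 * (lam ^ (2 * γ) - 1))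
            * (∫⁻ τ in Icc 0 t, eflux lam (2 * γ + θ) b a τ) := by
  have hl0 : 0 < lam := zero_lt_one.trans hlam
  have hc : 0 ≤ lam ^ (2 * γ) - 1 := by
    linarith [Real.one_le_rpow hlam.le (by linarith : (0:ℝ) ≤ 2 * γ)]
  have hmeas : ∀ n, AEMeasurable (fun τ => ENNReal.ofReal (shellFlux lam θ γ di a b n τ))
      (volume.restrict (Icc 0 t)) := fun n => aemeasurable_ofReal_restrict_Icc
    (continuousOn_shellFlux hsol.continuousOn_a hsol.continuousOn_b n) t
  have hflux := hsol.lintegral_tsum_ofReal_shellFlux (γ := γ) hl0.le hdi ha hb t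
  have hfin : ∫⁻ τ in Icc 0 t, ∑' j, ENNReal.ofReal (shellFlux lam θ γ di a b (j + 1) τ) ≠ ⊤ := by
    rw [hflux]
    exact ENNReal.add_ne_top.2 ⟨ENNReal.add_ne_top.2 ⟨haa, hba⟩,
      ENNReal.mul_ne_top ENNReal.ofReal_ne_top hbb⟩
  have hsource := tendsto_lintegral_ofReal_sum_range (fun j => hmeas (j + 1)) fun j =>
    (ae_restrict_iff' measurableSet_Icc).2 (ae_of_all _ fun τ hτ =>
      shellFlux_nonneg hl0.le hdi (ha (j + 1) τ hτ.1) (hb (j + 1) τ hτ.1))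
  have hboundary := (tendsto_add_atTop_iff_nat
      (f := fun N => ∫⁻ τ in Icc 0 t, ENNReal.ofReal (shellFlux lam θ γ di a b N τ)) 1).1
    (tendsto_lintegral_ofReal_of_lintegral_tsum_ne_top (fun j => hmeas (j + 1)) hfin)
  have hlhs := ((tendsto_ofReal_partialEnergy hl0.le γ a b t).add
    (hsol.tendsto_lintegral_partialDissipation (γ := γ) hl0.le hν hμ t)).add
    (ENNReal.Tendsto.const_mul (a := ENNReal.ofReal (2 * lam ^ (2 * γ))) hboundary
      (Or.inr ENNReal.ofReal_ne_top))
  have hrhs := (tendsto_ofReal_partialEnergy hl0.le γ a b 0).add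
    (ENNReal.Tendsto.const_mul (a := ENNReal.ofReal (2 * (lam ^ (2 * γ) - 1))) hsource
      (Or.inr ENNReal.ofReal_ne_top))
  have heq := tendsto_nhds_unique
    (hlhs.congr fun N => hsol.partialEnergy_balance hlam hγ hν hμ hdi ha hb N ht) hrhs
  rw [mul_zero, add_zero, hflux] at heq
  rw [heq, show 2 * di * (lam ^ (2 * γ) - 1) = 2 * (lam ^ (2 * γ) - 1) * di by ring,
    ENNReal.ofReal_mul (by linarith : (0:ℝ) ≤ 2 * (lam ^ (2 * γ) - 1))]
  ring

end IsDyadicSol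

lemma lintegral_dissipation_flux_lt_top {lam θ γ : ℝ} {a b : ℕ → ℝ → ℝ} (hlam : 1 ≤ lam)
    (hγ : 0 ≤ γ) (hθ : 3 + γ ≤ θ)
    (ha : ∀ n, ∀ τ ∈ Ici (0:ℝ), 0 ≤ a (n + 1) τ) (hb : ∀ n, ∀ τ ∈ Ici (0:ℝ), 0 ≤ b (n + 1) τ)
    {t : ℝ} (hloc : ∫⁻ τ in Icc 0 t,
      ((esum lam (θ / 3 + 2 * γ / 3) (fun j => a j τ)) ^ (3/2 : ℝ)
        + (esum lam ((θ + 1) / 3 + 2 * γ / 3) (fun j => b j τ)) ^ (3/2 : ℝ)) < ⊤) :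
    (∫⁻ τ in Icc 0 t, esum lam (γ + 1) (fun j => a j τ)) < ⊤ ∧
    (∫⁻ τ in Icc 0 t, esum lam (γ + 1) (fun j => b j τ)) < ⊤ ∧
    (∫⁻ τ in Icc 0 t, eflux lam (2 * γ + θ) a a τ) < ⊤ ∧
    (∫⁻ τ in Icc 0 t, eflux lam (2 * γ + θ) b a τ) < ⊤ ∧
    (∫⁻ τ in Icc 0 t, eflux lam (2 * γ + θ + 1) b b τ) < ⊤ := by
  set A := fun τ => esum lam (θ / 3 + 2 * γ / 3) (fun j => a j τ)
  set B := fun τ => esum lam ((θ + 1) / 3 + 2 * γ / 3) (fun j => b j τ)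
  set Φ := fun τ => A τ ^ (3/2 : ℝ) + B τ ^ (3/2 : ℝ) + 1
  have hfin : ∀ f : ℝ → ℝ≥0∞, (∀ τ ∈ Icc 0 t, f τ ≤ 2 * Φ τ) → ∫⁻ τ in Icc 0 t, f τ < ⊤ := by
    refine fun f hf => lintegral_lt_top_of_le_const_mul ENNReal.ofNat_ne_top ?_
      ((ae_restrict_iff' measurableSet_Icc).2 (ae_of_all _ hf))
    rw [lintegral_add_right _ measurable_const, setLIntegral_const, Real.volume_Icc, one_mul]
    exact ENNReal.add_lt_top.2 ⟨hloc, ENNReal.ofReal_lt_top⟩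
  have hA : ∀ τ, A τ ^ (3/2 : ℝ) ≤ Φ τ := fun τ => le_self_add.trans le_self_add
  have hB : ∀ τ, B τ ^ (3/2 : ℝ) ≤ Φ τ := fun τ => le_add_self.trans le_self_add
  have hdiss : ∀ τ (x y : ℝ≥0∞), x ≤ y → y ^ (3/2 : ℝ) + 1 ≤ Φ τ → x ≤ 2 * Φ τ :=
    fun τ x y hxy hy => hxy.trans <| (ENNReal.le_rpow_three_halves_add_one y).trans <|
      hy.trans <| le_self_add.trans_eq (two_mul _).symm
  have hflux : ∀ τ (x y z : ℝ≥0∞), x ≤ y * z ^ (2⁻¹ : ℝ) →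
      y ^ (3/2 : ℝ) ≤ Φ τ → z ^ (3/2 : ℝ) ≤ Φ τ → x ≤ 2 * Φ τ :=
    fun τ x y z hx hy hz => hx.trans <| (ENNReal.mul_rpow_inv_two_le y z).trans <|
      (add_le_add hy hz).trans_eq (two_mul _).symm
  have hq : 0 ≤ θ / 3 + 2 * γ / 3 := by linarith
  refine ⟨hfin _ fun τ _ => hdiss τ _ _ (esum_mono hlam (by linarith) _)
      (add_le_add_left le_self_add 1),
    hfin _ fun τ _ => hdiss τ _ _ (esum_mono hlam (by linarith) _)
      (add_le_add_left le_add_self 1),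
    hfin _ fun τ hτ => hflux τ _ _ _ (eflux_le_esum_mul_rpow_inv_two hlam hq (by linarith)
      a a τ fun j => ha (j + 1) τ hτ.1) (hA τ) (hA τ),
    hfin _ fun τ hτ => hflux τ _ _ _ (eflux_le_esum_mul_rpow_inv_two hlam hq (by linarith)
      b a τ fun j => ha (j + 1) τ hτ.1) (hB τ) (hA τ),
    hfin _ fun τ hτ => hflux τ _ _ _ (eflux_le_esum_mul_rpow_inv_two hlam (by linarith)
      (by linarith) b b τ fun j => hb (j + 1) τ hτ.1) (hB τ) (hB τ)⟩

theorem energy_equality_HallMHD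
    (lam θ γ ν μ di : ℝ) (hlam : 1 < lam) (hγ : 0 < γ) (hθ : 3 + γ < θ)
    (hν : 0 ≤ ν) (hμ : 0 ≤ μ) (hdi : 0 < di)
    (a b a' b' : ℕ → ℝ → ℝ)
    (hsol : IsDyadicSol lam θ ν μ di a b a' b')
    (hpos : PositiveSol a b)
    (hinit : esum lam γ (fun j => a j 0) + esum lam γ (fun j => b j 0) < ⊤)
    (hloc : ∀ T : ℝ, 0 < T →
      (∫⁻ t in Icc (0:ℝ) T,
          ((esum lam (θ / 3 + 2 * γ / 3) (fun j => a j t)) ^ (3/2 : ℝ)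
            + (esum lam ((θ + 1) / 3 + 2 * γ / 3) (fun j => b j t)) ^ (3/2 : ℝ))) < ⊤) :
    (∀ T : ℝ, 0 < T →
      (∫⁻ τ in Icc (0:ℝ) T, esum lam (γ + 1) (fun j => a j τ)) < ⊤ ∧
      (∫⁻ τ in Icc (0:ℝ) T, esum lam (γ + 1) (fun j => b j τ)) < ⊤ ∧
      (∫⁻ τ in Icc (0:ℝ) T, eflux lam (2 * γ + θ) a a τ) < ⊤ ∧
      (∫⁻ τ in Icc (0:ℝ) T, eflux lam (2 * γ + θ) b a τ) < ⊤ ∧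
      (∫⁻ τ in Icc (0:ℝ) T, eflux lam (2 * γ + θ + 1) b b τ) < ⊤) ∧
    (∀ t ∈ Ici (0:ℝ),
      esum lam γ (fun j => a j t) + esum lam γ (fun j => b j t) < ⊤) ∧
    (∀ t ∈ Ici (0:ℝ),
      esum lam γ (fun j => a j t) + esum lam γ (fun j => b j t)
        + (∫⁻ τ in Icc (0:ℝ) t,
            (ENNReal.ofReal (2 * ν) * esum lam (γ + 1) (fun j => a j τ)
              + ENNReal.ofReal (2 * μ) * esum lam (γ + 1) (fun j => b j τ)))
      = esum lam γ (fun j => a j 0) + esum lam γ (fun j => b j 0)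
        + ENNReal.ofReal (2 * (lam ^ (2 * γ) - 1))
            * (∫⁻ τ in Icc (0:ℝ) t, eflux lam (2 * γ + θ) a a τ)
        + ENNReal.ofReal (2 * di * (lam ^ (2 * γ) - 1))
            * (∫⁻ τ in Icc (0:ℝ) t, eflux lam (2 * γ + θ + 1) b b τ)
        + ENNReal.ofReal (2 * (lam ^ (2 * γ) - 1))
            * (∫⁻ τ in Icc (0:ℝ) t, eflux lam (2 * γ + θ) b a τ)) := by
  have ha : ∀ n, ∀ τ ∈ Ici (0:ℝ), 0 ≤ a (n + 1) τ :=
    fun n τ hτ => (hpos (n + 1) (Nat.le_add_left 1 n) τ hτ).1.le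
  have hb : ∀ n, ∀ τ ∈ Ici (0:ℝ), 0 ≤ b (n + 1) τ :=
    fun n τ hτ => (hpos (n + 1) (Nat.le_add_left 1 n) τ hτ).2.le
  have hbounds : ∀ t : ℝ, 0 ≤ t → _ := fun t ht =>
    lintegral_dissipation_flux_lt_top hlam.le hγ.le hθ.le ha hb
      ((lintegral_mono_set (Icc_subset_Icc_right (le_add_of_nonneg_right zero_le_one))).trans_lt
        (hloc (t + 1) (by linarith)))
  have henergy : ∀ t : ℝ, t ∈ Ici (0:ℝ) → _ := fun t (ht : 0 ≤ t) =>
    have ⟨_, _, haa, hba, hbb⟩ := hbounds t ht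
    hsol.energy_identity hlam hγ.le hν hμ hdi.le ha hb ht haa.ne hba.ne hbb.ne
  refine ⟨fun T hT => hbounds T hT.le, fun t ht => ?_, henergy⟩
  obtain ⟨-, -, haa, hba, hbb⟩ := hbounds t ht
  calc _ ≤ _ := le_self_add
    _ = _ := henergy t ht
    _ < ⊤ := ENNReal.add_lt_top.2 ⟨ENNReal.add_lt_top.2 ⟨ENNReal.add_lt_top.2
      ⟨hinit, ENNReal.mul_lt_top ENNReal.ofReal_lt_top haa⟩,
        ENNReal.mul_lt_top ENNReal.ofReal_lt_top hbb⟩, ENNReal.mul_lt_top ENNReal.ofReal_lt_top hba⟩
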